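/- arXiv:1905.05655 — 2 statements merged into one kernel-verified Lean document; each statement's English description precedes it below -/
import Mathlib

section
/- Assume w = 4, fix a real u ≥ 1 and an integer m ≥ 2, and define x* : ℕ⁺ → ℝ by x*(1) = a(m−1)·u and x*(i) = 4·x*(i−1) − ∑_{j=1}^{i−1} x*(j) for i ≥ 2. Set α = u·(2^{m−1}·m·a(m−1) − 1)/(2^m(m−1)) and β = u·(1 − 2^{m−1}·a(m−1))/(2^m(m−1)). Then: (i) x*(i) = (α + β·i)·2^i for every i ≥ 1; (ii) β > 0 and α + β = a(m−1)·u/2 > 0; (iii) x*(m) = u; (iv) x* is strictly increasing in i; and (v) x*(i) → +∞ as i → ∞. -/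
/-- The sequence `b` with `b 0 = 0` and `b i = (1 + b (i-1)) / (w - 1 - b (i-1))`. -/
noncomputable def bseq (w : ℝ) : ℕ → ℝ
  | 0 => 0
  | i + 1 => (1 + bseq w i) / (w - 1 - bseq w i)

/-- The sequence `a` with `a 0 = 1` and `a i = a (i-1) / (w - 1 - b (i-1))`. -/
noncomputable def aseq (w : ℝ) : ℕ → ℝ
  | 0 => 1
  | i + 1 => aseq w i / (w - 1 - bseq w i)

/-- The sequence `d` with `d 0 = 1` and `d i = d (i-1) * (1 + b (i-1))`. -/
noncomputable def dseq (w : ℝ) : ℕ → ℝ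
  | 0 => 1
  | i + 1 => dseq w i * (1 + bseq w i)

/-- The sequence `c` with `c 0 = 0` and `c i = c (i-1) + d (i-1) * a (i-1)`. -/
noncomputable def cseq (w : ℝ) : ℕ → ℝ
  | 0 => 0
  | i + 1 => cseq w i + dseq w i * aseq w i

lemma bseq4 (i : ℕ) : bseq 4 i = i / (i + 2) := by
  induction i with
  | zero => simp [bseq]
  | succ n ih =>
    have h2 : ((n:ℝ)+2) ≠ 0 := by positivity
    have h3 : ((n:ℝ)+3) ≠ 0 := by positivity
    rw [bseq, ih]
    have hB : (4 - 1 - (n:ℝ)/((n:ℝ)+2)) = (2*n+6)/((n:ℝ)+2) := by field_simp; ring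
    have hA : (1 + (n:ℝ)/((n:ℝ)+2)) = (2*n+2)/((n:ℝ)+2) := by field_simp; ring
    rw [hA, hB, div_div_div_cancel_right₀]
    push_cast
    rw [div_eq_div_iff (by positivity) (by positivity)]
    ring
    exact h2

lemma aseq4 (i : ℕ) : aseq 4 i = 2 / (((i:ℝ) + 2) * 2 ^ i) := by
  induction i with
  | zero => simp [aseq]
  | succ n ih =>
    have h2 : ((n:ℝ)+2) ≠ 0 := by positivity
    rw [aseq, ih, bseq4]
    have hB : (4 - 1 - (n:ℝ)/((n:ℝ)+2)) = (2*n+6)/((n:ℝ)+2) := by field_simp; ring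
    rw [hB]
    push_cast
    rw [div_div_eq_mul_div, div_mul_eq_mul_div, div_div, div_eq_div_iff (by positivity) (by positivity)]
    ring

lemma sum_geo_helper (β : ℝ) (n : ℕ) :
    ∑ j ∈ Finset.Icc 1 n, β * ((j:ℝ)+1) * 2 ^ j = β * n * 2 ^ (n+1) := by
  induction n with
  | zero => simp
  | succ k ih =>
    rw [Finset.sum_Icc_succ_top (by omega), ih]
    push_cast
    ring

/-- closed form and properties of the optimal bid sequence `x*` when `w = 4`. -/
theorem xstar_closed_form_w_eq_four (u : ℝ) (hu : 1 ≤ u) (m : ℕ) (hm : 2 ≤ m)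
    (x : ℕ → ℝ) (hx1 : x 1 = aseq 4 (m - 1) * u)
    (hxrec : ∀ i : ℕ, 2 ≤ i → x i = 4 * x (i - 1) - ∑ j ∈ Finset.Icc 1 (i - 1), x j)
    (α β : ℝ)
    (hα : α = u * (2 ^ (m - 1) * (m : ℝ) * aseq 4 (m - 1) - 1) / (2 ^ m * ((m : ℝ) - 1)))
    (hβ : β = u * (1 - 2 ^ (m - 1) * aseq 4 (m - 1)) / (2 ^ m * ((m : ℝ) - 1))) :
    (∀ i : ℕ, 1 ≤ i → x i = (α + β * (i : ℝ)) * 2 ^ i) ∧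
    (0 < β ∧ α + β = aseq 4 (m - 1) * u / 2 ∧ 0 < aseq 4 (m - 1) * u / 2) ∧
    x m = u ∧
    (∀ i : ℕ, 1 ≤ i → x i < x (i + 1)) ∧
    Filter.Tendsto x Filter.atTop Filter.atTop := by
  have hm1 : m - 1 + 1 = m := by omega
  have hM : (2:ℝ) ≤ (m:ℝ) := by exact_mod_cast hm
  have h2m : (2:ℝ)^m = 2^(m-1) * 2 := by rw [← pow_succ, hm1]
  have hup : (0:ℝ) < u := by linarith
  have ha : aseq 4 (m-1) = 2 / (((m:ℝ)+1) * 2^(m-1)) := by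
    rw [aseq4, Nat.cast_sub (by omega : 1 ≤ m)]
    push_cast
    ring_nf
  have h1 : ((m:ℝ)+1) ≠ 0 := by positivity
  have h2 : ((m:ℝ)-1) ≠ 0 := by nlinarith
  have h3 : (2:ℝ)^(m-1) ≠ 0 := by positivity
  have hβ' : β = u / (((m:ℝ)+1) * 2^m) := by
    rw [hβ, ha, h2m]
    field_simp
    ring
  have hα' : α = u / (((m:ℝ)+1) * 2^m) := by
    rw [hα, ha, h2m]
    field_simp
    ring
  have hβpos : 0 < β := by
    rw [hβ']
    positivity
  have hαβ : α = β := by rw [hα', hβ']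
  have key : ∀ i : ℕ, 1 ≤ i → x i = β * ((i:ℝ)+1) * 2 ^ i := by
    intro i
    induction i using Nat.strong_induction_on with
    | _ i IH =>
      intro hi
      rcases eq_or_lt_of_le hi with h1' | h2' 
      · rw [← h1', hx1, ha, hβ', h2m]
        field_simp
        ring
      · obtain ⟨k, rfl⟩ : ∃ k, i = k + 1 := ⟨i - 1, by omega⟩
        have hk : 1 ≤ k := by omega
        rw [hxrec (k+1) (by omega)]
        simp only [Nat.add_sub_cancel]
        have hsum : ∑ j ∈ Finset.Icc 1 k, x j = ∑ j ∈ Finset.Icc 1 k, β * ((j:ℝ)+1) * 2 ^ j := by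
          refine Finset.sum_congr rfl fun j hj => ?_
          simp only [Finset.mem_Icc] at hj
          exact IH j (by omega) hj.1
        rw [hsum, sum_geo_helper, IH k (by omega) hk]
        push_cast
        ring
  refine ⟨?_, ⟨hβpos, ?_, ?_⟩, ?_, ?_, ?_⟩
  · intro i hi
    rw [key i hi, hαβ]; ring
  · rw [hαβ, hβ', ha, h2m]; field_simp; ring
  · rw [ha]; positivity
  · rw [key m (by omega), hβ']
    field_simp
  · intro i hi
    rw [key i hi, key (i+1) (by omega)]
    have h2i : (0:ℝ) < 2 ^ i := by positivity
    push_cast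
    rw [pow_succ]
    nlinarith [mul_pos hβpos h2i, mul_nonneg (mul_pos hβpos h2i).le (Nat.cast_nonneg i : (0:ℝ) ≤ i)]
  · have hmono : ∀ᶠ i : ℕ in Filter.atTop, β * (i:ℝ) ≤ x i := by
      rw [Filter.eventually_atTop]
      refine ⟨1, fun i hi => ?_⟩
      rw [key i hi]
      have h2i : (1:ℝ) ≤ 2 ^ i := one_le_pow₀ (by norm_num : (1:ℝ) ≤ 2)
      have hic : (0:ℝ) ≤ (i:ℝ) := Nat.cast_nonneg i
      nlinarith [mul_nonneg (mul_nonneg hβpos.le hic) (by linarith : (0:ℝ) ≤ 2 ^ i - 1)]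
    exact Filter.tendsto_atTop_mono' _ hmono
      (Filter.Tendsto.const_mul_atTop hβpos tendsto_natCast_atTop_atTop)
end

section
/- Fix a real u ≥ 1 and an integer m ≥ 1, and assume a(m−1)·u ≤ w. Define x* : ℕ → ℝ by x*(0) = 1, x*(1) = a(m−1)·u, and x*(i) = w·x*(i−1) − ∑_{j=1}^{i−1} x*(j) for i ≥ 2. Then: (i) x*(i) > 0 for all i ≥ 1 and x*(i) < x*(i+1) for all i ≥ 1; (ii) x*(m) = u; (iii) ∑_{j=1}^{i} x*(j) ≤ w·x*(i−1) for every i ≥ 1, with equality for every i ≥ 2; (iv) ∑_{j=1}^{m} x*(j) = c(m)·u; and (v) for every sequence x : ℕ → ℝ with x(0) = 1, x(i) ≥ 0 for 1 ≤ i ≤ m, x(m) = u, and ∑_{j=1}^{i} x(j) ≤ w·x(i−1) for all 1 ≤ i ≤ m, one has ∑_{j=1}^{m} x(j) ≥ c(m)·u. That is, x* is an optimal feasible solution of the linear program L_{m,u}, with optimal value c(m)·u. -/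
open Finset

section Sequences

variable {w : ℝ}

lemma bseq_nonneg_and_lt_one (hw : 4 ≤ w) : ∀ i, 0 ≤ bseq w i ∧ bseq w i < 1
  | 0 => by simp [bseq]
  | i + 1 => by
    obtain ⟨h0, h1⟩ := bseq_nonneg_and_lt_one hw i
    rw [bseq, div_lt_one (by linarith)]
    exact ⟨div_nonneg (by linarith) (by linarith), by linarith⟩

lemma two_le_sub_bseq (hw : 4 ≤ w) (i : ℕ) : 2 ≤ w - 1 - bseq w i := by
  linarith [(bseq_nonneg_and_lt_one hw i).2]

lemma bseq_succ_mul (hw : 4 ≤ w) (i : ℕ) :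
    bseq w (i + 1) * (w - 1 - bseq w i) = 1 + bseq w i := by
  rw [bseq, div_mul_cancel₀ _ (by linarith [two_le_sub_bseq hw i])]

lemma one_add_bseq_succ_mul (hw : 4 ≤ w) (i : ℕ) :
    (1 + bseq w (i + 1)) * (w - 1 - bseq w i) = w := by
  linear_combination bseq_succ_mul hw i

lemma aseq_succ_mul (hw : 4 ≤ w) (i : ℕ) :
    aseq w (i + 1) * (w - 1 - bseq w i) = aseq w i := by
  rw [aseq, div_mul_cancel₀ _ (by linarith [two_le_sub_bseq hw i])]

lemma aseq_pos (hw : 4 ≤ w) : ∀ i, 0 < aseq w i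
  | 0 => by simp [aseq]
  | i + 1 => div_pos (aseq_pos hw i) (by linarith [two_le_sub_bseq hw i])

lemma bseq_succ_succ_sub (hw : 4 ≤ w) (i : ℕ) :
    bseq w (i + 2) - bseq w (i + 1) = (bseq w (i + 1) - bseq w i) * bseq w (i + 2) := by
  refine mul_right_cancel₀ (by linarith [two_le_sub_bseq hw (i + 1)] :
    w - 1 - bseq w (i + 1) ≠ 0) ?_
  linear_combination (1 - bseq w (i + 1) + bseq w i) * bseq_succ_mul hw (i + 1) - bseq_succ_mul hw i

lemma dseq_succ_mul_aseq_succ (w : ℝ) (i : ℕ) :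
    dseq w (i + 1) * aseq w (i + 1) = dseq w i * aseq w i * bseq w (i + 1) := by
  simp only [dseq, aseq, bseq]
  ring

lemma dseq_succ_mul_aseq_succ_eq_sub (hw : 4 ≤ w) :
    ∀ i, dseq w (i + 1) * aseq w (i + 1) = bseq w (i + 1) - bseq w i
  | 0 => by simp [dseq, aseq, bseq]
  | i + 1 => by
    rw [dseq_succ_mul_aseq_succ, dseq_succ_mul_aseq_succ_eq_sub hw i, bseq_succ_succ_sub hw i]

lemma cseq_succ (hw : 4 ≤ w) : ∀ i, cseq w (i + 1) = 1 + bseq w i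
  | 0 => by simp [cseq, dseq, aseq, bseq]
  | i + 1 => by
    rw [cseq, cseq_succ hw i, dseq_succ_mul_aseq_succ_eq_sub hw i]
    ring

end Sequences

section PartialSums

variable {w : ℝ}

lemma one_add_bseq_mul_le_sum_Icc (hw : 4 ≤ w) {y : ℕ → ℝ} {n : ℕ}
    (hy : ∀ k < n, ∑ j ∈ Icc 1 (k + 2), y j ≤ w * y (k + 1)) :
    ∀ k ≤ n, (1 + bseq w k) * y (k + 1) ≤ ∑ j ∈ Icc 1 (k + 1), y j
  | 0, _ => by simp [bseq]
  | k + 1, hk => by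
    show (1 + bseq w (k + 1)) * y (k + 2) ≤ ∑ j ∈ Icc 1 (k + 2), y j
    have ih := one_add_bseq_mul_le_sum_Icc hw hy k (by omega)
    have hsum : ∑ j ∈ Icc 1 (k + 2), y j = ∑ j ∈ Icc 1 (k + 1), y j + y (k + 2) :=
      sum_Icc_succ_top (by omega) _
    have hb := (bseq_nonneg_and_lt_one hw k).1
    have h₁ := mul_le_mul_of_nonneg_left (hy k (by omega)) (by linarith : 0 ≤ 1 + bseq w k)
    have h₂ := mul_le_mul_of_nonneg_left ih (by linarith : 0 ≤ w)
    refine le_of_mul_le_mul_right ?_ (by linarith [two_le_sub_bseq hw k] :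
      0 < w - 1 - bseq w k)
    rw [hsum] at h₁ ⊢
    rw [mul_right_comm, one_add_bseq_succ_mul hw k]
    linarith

lemma sum_Icc_eq_one_add_bseq_mul (hw : 4 ≤ w) {y : ℕ → ℝ} {n : ℕ}
    (hy : ∀ k < n, ∑ j ∈ Icc 1 (k + 2), y j = w * y (k + 1)) (k : ℕ) (hk : k ≤ n) :
    ∑ j ∈ Icc 1 (k + 1), y j = (1 + bseq w k) * y (k + 1) := by
  refine le_antisymm ?_ (one_add_bseq_mul_le_sum_Icc hw (fun k hk => (hy k hk).le) k hk)
  have h := one_add_bseq_mul_le_sum_Icc hw (y := fun j => -y j) (n := n)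
    (fun k hk => by simp only [sum_neg_distrib, hy k hk, mul_neg, le_refl]) k hk
  simp only [sum_neg_distrib, mul_neg] at h
  linarith

end PartialSums

section Recurrence

variable {w : ℝ} {x : ℕ → ℝ}

lemma sum_Icc_eq_of_rec
    (hrec : ∀ i : ℕ, 2 ≤ i → x i = w * x (i - 1) - ∑ j ∈ Icc 1 (i - 1), x j) :
    ∀ i : ℕ, 2 ≤ i → ∑ j ∈ Icc 1 i, x j = w * x (i - 1) := by
  intro i hi
  obtain ⟨k, rfl⟩ : ∃ k, i = k + 1 := ⟨i - 1, by omega⟩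
  rw [sum_Icc_succ_top (by omega), hrec (k + 1) hi, Nat.add_sub_cancel]
  ring

lemma sum_Icc_succ_eq_of_rec (hw : 4 ≤ w)
    (hrec : ∀ i : ℕ, 2 ≤ i → x i = w * x (i - 1) - ∑ j ∈ Icc 1 (i - 1), x j) (k : ℕ) :
    ∑ j ∈ Icc 1 (k + 1), x j = (1 + bseq w k) * x (k + 1) :=
  sum_Icc_eq_one_add_bseq_mul hw (n := k)
    (fun j _ => sum_Icc_eq_of_rec hrec (j + 2) (by omega)) k le_rfl

lemma succ_eq_of_rec (hw : 4 ≤ w)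
    (hrec : ∀ i : ℕ, 2 ≤ i → x i = w * x (i - 1) - ∑ j ∈ Icc 1 (i - 1), x j) (k : ℕ) :
    x (k + 2) = (w - 1 - bseq w k) * x (k + 1) := by
  have h : ∑ j ∈ Icc 1 (k + 1), x j + x (k + 2) = w * x (k + 1) :=
    (sum_Icc_succ_top (by omega) x).symm.trans (sum_Icc_eq_of_rec hrec (k + 2) (by omega))
  rw [sum_Icc_succ_eq_of_rec hw hrec k] at h
  linear_combination h

lemma aseq_mul_eq_of_rec (hw : 4 ≤ w)
    (hrec : ∀ i : ℕ, 2 ≤ i → x i = w * x (i - 1) - ∑ j ∈ Icc 1 (i - 1), x j) :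
    ∀ k, aseq w k * x (k + 1) = x 1
  | 0 => by simp [aseq]
  | k + 1 => by
    rw [succ_eq_of_rec hw hrec k, ← aseq_mul_eq_of_rec hw hrec k, ← aseq_succ_mul hw k]
    ring

lemma lt_succ_of_rec (hw : 4 ≤ w)
    (hrec : ∀ i : ℕ, 2 ≤ i → x i = w * x (i - 1) - ∑ j ∈ Icc 1 (i - 1), x j) {k : ℕ}
    (hk : 0 < x (k + 1)) : x (k + 1) < x (k + 2) := by
  rw [succ_eq_of_rec hw hrec k]
  nlinarith [two_le_sub_bseq hw k]

lemma pos_of_rec (hw : 4 ≤ w)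
    (hrec : ∀ i : ℕ, 2 ≤ i → x i = w * x (i - 1) - ∑ j ∈ Icc 1 (i - 1), x j)
    (h₁ : 0 < x 1) : ∀ k, 0 < x (k + 1)
  | 0 => h₁
  | k + 1 => (pos_of_rec hw hrec h₁ k).trans (lt_succ_of_rec hw hrec (pos_of_rec hw hrec h₁ k))

end Recurrence

/-- if `a (m-1) * u ≤ w`, the sequence `x*` is an optimal feasible
solution of the linear program `L_{m,u}`, with optimal value `c m * u`. -/
theorem xstar_optimal_feasible (w : ℝ) (hw : 4 ≤ w) (u : ℝ) (hu : 1 ≤ u)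
    (m : ℕ) (hm : 1 ≤ m) (hfeas : aseq w (m - 1) * u ≤ w)
    (x : ℕ → ℝ) (hx0 : x 0 = 1) (hx1 : x 1 = aseq w (m - 1) * u)
    (hxrec : ∀ i : ℕ, 2 ≤ i → x i = w * x (i - 1) - ∑ j ∈ Finset.Icc 1 (i - 1), x j) :
    (∀ i : ℕ, 1 ≤ i → 0 < x i ∧ x i < x (i + 1)) ∧
    x m = u ∧
    (∀ i : ℕ, 1 ≤ i → ∑ j ∈ Finset.Icc 1 i, x j ≤ w * x (i - 1)) ∧
    (∀ i : ℕ, 2 ≤ i → ∑ j ∈ Finset.Icc 1 i, x j = w * x (i - 1)) ∧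
    (∑ j ∈ Finset.Icc 1 m, x j = cseq w m * u) ∧
    (∀ y : ℕ → ℝ, y 0 = 1 → (∀ i : ℕ, 1 ≤ i → i ≤ m → 0 ≤ y i) → y m = u →
      (∀ i : ℕ, 1 ≤ i → i ≤ m → ∑ j ∈ Finset.Icc 1 i, y j ≤ w * y (i - 1)) →
      ∑ j ∈ Finset.Icc 1 m, y j ≥ cseq w m * u) := by
  obtain ⟨n, rfl⟩ : ∃ n, m = n + 1 := ⟨m - 1, by omega⟩
  rw [Nat.add_sub_cancel] at hfeas hx1
  have hx1_pos : 0 < x 1 := hx1 ▸ mul_pos (aseq_pos hw n) (by linarith)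
  have hxm : x (n + 1) = u :=
    mul_left_cancel₀ (aseq_pos hw n).ne' ((aseq_mul_eq_of_rec hw hxrec n).trans hx1)
  have hpos := pos_of_rec hw hxrec hx1_pos
  refine ⟨fun i hi => ?_, hxm, fun i hi => ?_, sum_Icc_eq_of_rec hxrec, ?_, ?_⟩
  · obtain ⟨k, rfl⟩ : ∃ k, i = k + 1 := ⟨i - 1, by omega⟩
    exact ⟨hpos k, lt_succ_of_rec hw hxrec (hpos k)⟩
  · rcases (by omega : i = 1 ∨ 2 ≤ i) with rfl | hi2
    · simpa [hx0, hx1] using hfeas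
    · exact (sum_Icc_eq_of_rec hxrec i hi2).le
  · rw [sum_Icc_succ_eq_of_rec hw hxrec n, cseq_succ hw, hxm]
  · intro y _ _ hym hy
    rw [cseq_succ hw, ← hym]
    exact one_add_bseq_mul_le_sum_Icc hw (fun k hk => hy (k + 2) (by omega) (by omega)) n le_rfl
end
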